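/- Let C be a skew cyclic code of length s over R₄ and let A be the set of nonzero polynomials of minimal degree in C. If A contains a monic skew polynomial, then C = ⟨g(x) + 2a(x)⟩ as a left R₄[x,θ₄]-submodule of R₄[x,θ₄]/⟨x^s−1⟩, where g(x) + 2a(x) is a right divisor of x^s−1 in R₄[x,θ₄], the mod-2 reduction of g(x) is a right divisor of x^s−1 in R₂[x,θ₂], and deg(a(x)) < deg(g(x)). -/

import Mathlib

set_option synthInstance.maxHeartbeats 1000000
set_option maxHeartbeats 2000000

noncomputable section
open Polynomial

abbrev Z4 : Type := ZMod 4
abbrev Z2 : Type := ZMod 2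

/-- The mod 2 reduction map `Z₄ → Z₂`. -/
def bar : Z4 →+* Z2 := ZMod.castHom (m := 2) (by norm_num) Z2

/-- The ring `R₄ = Z₄[x]/⟨h⟩` (for `h` basic primitive, the Galois ring `GR(4,m)`). -/
abbrev R4 (h : Z4[X]) : Type := Z4[X] ⧸ Ideal.span {h}

/-- The ring `R₂ = Z₂[x]/⟨h̄⟩` (for `h` basic primitive, the field `F_{2^m}`). -/
abbrev R2 (h : Z4[X]) : Type := Z2[X] ⧸ Ideal.span {h.map bar}

/-- `ξ`, the class of `x` in `R₄`. -/
def xi (h : Z4[X]) : R4 h := Ideal.Quotient.mk _ X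

/-- `ξ̄`, the class of `x` in `R₂`. -/
def xibar (h : Z4[X]) : R2 h := Ideal.Quotient.mk _ X

/-- The coefficientwise mod 2 reduction `R₄ → R₂`. -/
def barR (h : Z4[X]) : R4 h →+* R2 h :=
  Ideal.quotientMap (Ideal.span {h.map bar}) (Polynomial.mapRingHom bar)
    (by
      rw [Ideal.span_le]
      intro p hp
      simp only [Set.mem_singleton_iff] at hp
      subst hp
      exact Ideal.mem_comap.mpr (Ideal.subset_span (by simp)))

/-- The canonical representative (of degree `< deg h`) of an element of `R₄`. -/
def rep4 (h : Z4[X]) (α : R4 h) : Z4[X] := Quotient.out α %ₘ h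

/-- The canonical representative (of degree `< deg h̄`) of an element of `R₂`. -/
def rep2 (h : Z4[X]) (α : R2 h) : Z2[X] := Quotient.out α %ₘ (h.map bar)

/-- The Frobenius map `θ₄ : ∑ vᵢ ξ^i ↦ ∑ vᵢ ξ^{2i}` of `R₄`, as a bare function:
substitute `ξ²` in the canonical representative. -/
def thetaFun4 (h : Z4[X]) (α : R4 h) : R4 h := Polynomial.aeval (xi h ^ 2) (rep4 h α)

/-- The Frobenius map `θ₂ : ∑ vᵢ ξ̄^i ↦ ∑ vᵢ ξ̄^{2i}` of `R₂`, as a bare function. -/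
def thetaFun2 (h : Z4[X]) (α : R2 h) : R2 h := Polynomial.aeval (xibar h ^ 2) (rep2 h α)

/-- A lift `ι : R₂ → R₄` with `ι` mod 2 the identity: lift the coefficients of the
canonical representative from `{0,1}`. -/
def iota (h : Z4[X]) (α : R2 h) : R4 h :=
  Ideal.Quotient.mk _ ((rep2 h α).sum fun i a => C ((a.val : Z4)) * X ^ i)

/-- `h` is a monic basic primitive polynomial of degree `m`:  `h` is monic, its mod 2
reduction `h̄` is irreducible over `Z₂`, and the root `ξ̄` of `h̄` is a primitive
element, i.e. has multiplicative order `2^m - 1`. -/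
def BasicPrimitive (h : Z4[X]) (m : ℕ) : Prop :=
  h.Monic ∧ h.natDegree = m ∧ Irreducible (h.map bar) ∧ orderOf (xibar h) = 2 ^ m - 1

/-- The scalar multiplication `γ * (α,β) = (γ̄α, γβ)` making `R₂^r × R₄^s` (or any
mixed-alphabet tuple space) an `R₄`-module. -/
def smulStar (h : Z4[X]) {α β : Type*} (γ : R4 h) (v : (α → R2 h) × (β → R4 h)) :
    (α → R2 h) × (β → R4 h) :=
  (fun i => barR h γ * v.1 i, fun j => γ * v.2 j)

/-! ### Skew polynomial rings -/

/-- The additive endomorphism `p(x) ↦ pᶿ(x)·x` of `A[x]` (the twisted shift). -/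
def Tmap {A : Type*} [CommRing A] (θ : A →+* A) : AddMonoid.End (Polynomial A) :=
  (AddMonoidHom.mulRight (X : Polynomial A)).comp (Polynomial.mapRingHom θ).toAddMonoidHom

/-- Left multiplication by the constant `a`, as an additive endomorphism of `A[x]`. -/
def Lmap {A : Type*} [CommRing A] (a : A) : AddMonoid.End (Polynomial A) :=
  AddMonoidHom.mulLeft (C a)

/-- The skew polynomial ring `A[x;θ]`, realized as the subring of additive
endomorphisms of `A[x]` generated by the constants (acting by left multiplication)
and the twisted shift `Tmap θ`.  In this model multiplication is composition, so
`(a·xᵏ)·(b·xʲ) = a θᵏ(b) x^{k+j}`, i.e. `x·a = θ(a)·x`. -/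
def SkewPolySubring (A : Type*) [CommRing A] (θ : A →+* A) :
    Subring (AddMonoid.End (Polynomial A)) :=
  Subring.closure ((Set.range (Lmap (A := A))) ∪ {Tmap θ})

/-- The skew polynomial ring `A[x;θ]` as a type. -/
abbrev Skew (A : Type*) [CommRing A] (θ : A →+* A) : Type _ := SkewPolySubring A θ

/-- The element `x` of `A[x;θ]`. -/
def xSkew (A : Type*) [CommRing A] (θ : A →+* A) : Skew A θ :=
  ⟨Tmap θ, Subring.subset_closure (Set.mem_union_right _ rfl)⟩

/-- The constant `a` as an element of `A[x;θ]`. -/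
def cSkew {A : Type*} [CommRing A] (θ : A →+* A) (a : A) : Skew A θ :=
  ⟨Lmap a, Subring.subset_closure (Set.mem_union_left _ ⟨a, rfl⟩)⟩

/-- The skew polynomial `∑ aᵢ xⁱ ∈ A[x;θ]` attached to coefficient data `p = ∑ aᵢ Xⁱ`. -/
def ofPoly {A : Type*} [CommRing A] (θ : A →+* A) (p : Polynomial A) : Skew A θ :=
  p.sum fun i a => cSkew θ a * xSkew A θ ^ i

/-- The coefficient data of a skew polynomial, recovered by applying the
endomorphism to the polynomial `1`. -/
def toPoly {A : Type*} [CommRing A] {θ : A →+* A} (f : Skew A θ) : Polynomial A :=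
  (f : AddMonoid.End (Polynomial A)) 1

/-- `g |ᵣ p` : `g` is a right divisor of `p` in `A[x;θ]`, i.e. `p = u·g`. -/
def RDvd {A : Type*} [CommRing A] {θ : A →+* A} (g p : Skew A θ) : Prop :=
  ∃ u : Skew A θ, p = u * g

/-- The left ideal `⟨x^n - 1⟩` of `A[x;θ]`. -/
def skewIdeal (A : Type*) [CommRing A] (θ : A →+* A) (n : ℕ) :
    Submodule (Skew A θ) (Skew A θ) :=
  Submodule.span (Skew A θ) {xSkew A θ ^ n - 1}

/-- The quotient left `A[x;θ]`-module `A[x;θ]/⟨x^n-1⟩`. -/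
abbrev SkewQuot (A : Type*) [CommRing A] (θ : A →+* A) (n : ℕ) : Type _ :=
  Skew A θ ⧸ skewIdeal A θ n

/-- The polynomial `c₀ + c₁X + ⋯ + c_{n-1}X^{n-1}` attached to a word `c ∈ Aⁿ`. -/
def wordPoly {A : Type*} [CommRing A] {n : ℕ} (c : Fin n → A) : Polynomial A :=
  ∑ i : Fin n, C (c i) * X ^ (i : ℕ)

/-- Identify the word `c ∈ Aⁿ` with the class of `∑ cᵢ xⁱ` in `A[x;θ]/⟨x^n-1⟩`. -/
def wordToQuot {A : Type*} [CommRing A] (θ : A →+* A) {n : ℕ} (c : Fin n → A) :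
    SkewQuot A θ n :=
  Submodule.Quotient.mk (ofPoly θ (wordPoly c))

/-- A linear code of length `n` over `A`: an `A`-submodule of `Aⁿ`, as a set. -/
def IsLinearCode (A : Type*) [CommRing A] {n : ℕ} (C : Set (Fin n → A)) : Prop :=
  0 ∈ C ∧ (∀ u ∈ C, ∀ v ∈ C, u + v ∈ C) ∧ ∀ γ : A, ∀ u ∈ C, γ • u ∈ C

/-- The `θ`-cyclic shift `(c₀,…,c_{n-1}) ↦ (θ(c_{n-1}),θ(c₀),…,θ(c_{n-2}))`. -/
def skewShift {A : Type*} [CommRing A] (θ : A →+* A) {n : ℕ} [NeZero n]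
    (c : Fin n → A) : Fin n → A :=
  fun i => θ (c (i - 1))

/-!
Let `f` be the monic codeword polynomial of minimal degree. Because `f` is monic, every skew
polynomial `p` can be divided on the right by it, `p = u f + r` with `deg r < deg f`. If the class
of `p` lies in the code, then so does the class of `r`, because the code is a left
`A[x;θ]`-submodule. Since `deg r < deg f < s`, that class is the codeword `r` itself, and the
minimality of `deg f` forces `r = 0`. Taking `p = xˢ - 1` shows that `f` is a right divisor of
`xˢ - 1`. Taking `p` to be any codeword shows that `C = ⟨f⟩`.

For the decomposition, write `f = g + 2a`, where `g` lifts the reduction `f̄` coefficientwise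
through `ι`. Then `ḡ = f̄`. Reduction mod 2 commutes with the Frobenius maps, because `ξ̄²` is again
a root of `h̄`, so it carries `xˢ - 1 = u f` over to `R₂[x,θ₂]`. Both `f` and `g` have leading
coefficient `1` in the same degree, which gives `deg a < deg g`.
-/

section SkewMul
variable {A : Type*} [CommRing A] (θ : A →+* A)

/-- The multiplication of `A[x;θ]`, transported to coefficient polynomials. -/
def skewMul : A[X] →+ AddMonoid.End A[X] :=
  AddMonoidHom.mk'
    (fun p => AddMonoidHom.mk' (fun q => p.sum fun i a => C a * q.map (θ ^ i) * X ^ i)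
      fun q r => by simp only [Polynomial.map_add, mul_add, add_mul, Polynomial.sum_add])
    fun p q => AddMonoidHom.ext fun r =>
      Polynomial.sum_add_index p q (fun i a => C a * r.map (θ ^ i) * X ^ i) (by simp)
        (by simp [add_mul])

theorem skewMul_apply (p q : A[X]) :
    skewMul θ p q = p.sum fun i a => C a * q.map (θ ^ i) * X ^ i := rfl

theorem skewMul_add_left (p p' q : A[X]) :
    skewMul θ (p + p') q = skewMul θ p q + skewMul θ p' q := by
  rw [map_add]
  rfl

theorem skewMul_monomial_left (i : ℕ) (a : A) (q : A[X]) :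
    skewMul θ (monomial i a) q = C a * q.map (θ ^ i) * X ^ i :=
  Polynomial.sum_monomial_index a (fun i a => C a * q.map (θ ^ i) * X ^ i) (by simp)

theorem skewMul_monomial_monomial (i j : ℕ) (a b : A) :
    skewMul θ (monomial i a) (monomial j b) = monomial (i + j) (a * (θ ^ i) b) := by
  rw [skewMul_monomial_left, map_monomial, C_mul_monomial, monomial_mul_X_pow, add_comm]

theorem skewMul_assoc (p q r : A[X]) :
    skewMul θ (skewMul θ p q) r = skewMul θ p (skewMul θ q r) := by
  induction p using Polynomial.induction_on' with
  | add p p' hp hp' => simp only [skewMul_add_left, hp, hp']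
  | monomial i a =>
  induction q using Polynomial.induction_on' with
  | add q q' hq hq' =>
    rw [map_add (skewMul θ (monomial i a)), skewMul_add_left, skewMul_add_left, map_add, hq, hq']
  | monomial j b =>
  induction r using Polynomial.induction_on' with
  | add r r' hr hr' => simp only [map_add, hr, hr']
  | monomial k c =>
    simp only [skewMul_monomial_monomial, map_mul, pow_add, RingHom.mul_def,
      RingHom.comp_apply, add_assoc, mul_assoc]

theorem skewMul_C_left (a : A) (q : A[X]) : skewMul θ (C a) q = C a * q := by
  simpa [RingHom.one_def] using skewMul_monomial_left θ 0 a q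

theorem skewMul_X_left (q : A[X]) : skewMul θ X q = q.map θ * X := by
  simpa [monomial_one_one_eq_X] using skewMul_monomial_left θ 1 1 q

theorem skewMul_one_right (p : A[X]) : skewMul θ p 1 = p := by
  conv_rhs => rw [← p.sum_C_mul_X_pow_eq]
  simp [skewMul_apply]

end SkewMul

section SkewModel
variable {A : Type*} [CommRing A] (θ : A →+* A)

def skewMulSubring : Subring (AddMonoid.End A[X]) where
  carrier := Set.range (skewMul θ)
  mul_mem' := by
    rintro _ _ ⟨p, rfl⟩ ⟨q, rfl⟩
    exact ⟨skewMul θ p q, AddMonoidHom.ext fun r => skewMul_assoc θ p q r⟩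
  one_mem' := ⟨1, DFunLike.ext _ _ fun q => by rw [← C_1, skewMul_C_left, C_1, one_mul]; rfl⟩
  add_mem' := by
    rintro _ _ ⟨p, rfl⟩ ⟨q, rfl⟩
    exact ⟨p + q, map_add _ _ _⟩
  zero_mem' := ⟨0, map_zero _⟩
  neg_mem' := by
    rintro _ ⟨p, rfl⟩
    exact ⟨-p, map_neg _ _⟩

theorem skewPolySubring_le_skewMulSubring : SkewPolySubring A θ ≤ skewMulSubring θ := by
  refine Subring.closure_le.mpr ?_
  rintro _ (⟨a, rfl⟩ | rfl)
  · exact ⟨C a, AddMonoidHom.ext fun q => skewMul_C_left θ a q⟩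
  · exact ⟨X, AddMonoidHom.ext fun q => skewMul_X_left θ q⟩

theorem coe_eq_skewMul_toPoly (f : Skew A θ) :
    (f : AddMonoid.End A[X]) = skewMul θ (toPoly f) := by
  obtain ⟨p, hp⟩ := skewPolySubring_le_skewMulSubring θ f.2
  have hfp : toPoly f = p := by rw [toPoly, ← hp, skewMul_one_right]
  rw [hfp, hp]

theorem toPoly_injective : Function.Injective (toPoly : Skew A θ → A[X]) := fun f g hfg =>
  Subtype.ext <| by rw [coe_eq_skewMul_toPoly, coe_eq_skewMul_toPoly, hfg]

variable {θ}

theorem toPoly_mul (f g : Skew A θ) : toPoly (f * g) = skewMul θ (toPoly f) (toPoly g) := by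
  change (f : AddMonoid.End A[X]) (toPoly g) = _
  rw [coe_eq_skewMul_toPoly]

theorem toPoly_add (f g : Skew A θ) : toPoly (f + g) = toPoly f + toPoly g := rfl

theorem toPoly_sub (f g : Skew A θ) : toPoly (f - g) = toPoly f - toPoly g := rfl

theorem toPoly_one : toPoly (1 : Skew A θ) = 1 := rfl

theorem toPoly_cSkew (a : A) : toPoly (cSkew θ a) = C a := mul_one (C a)

theorem toPoly_xSkew : toPoly (xSkew A θ) = X := by
  change ((1 : A[X]).map θ) * X = X
  rw [Polynomial.map_one, one_mul]

theorem toPoly_xSkew_pow (k : ℕ) : toPoly (xSkew A θ ^ k) = X ^ k := by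
  induction k with
  | zero => rfl
  | succ k ih =>
    rw [pow_succ', toPoly_mul, ih, toPoly_xSkew, skewMul_X_left, Polynomial.map_pow,
      Polynomial.map_X, pow_succ]

theorem cSkew_zero : cSkew θ (0 : A) = 0 :=
  toPoly_injective θ (by rw [toPoly_cSkew, C_0]; rfl)

theorem cSkew_add (a b : A) : cSkew θ (a + b) = cSkew θ a + cSkew θ b :=
  toPoly_injective θ (by rw [toPoly_add, toPoly_cSkew, toPoly_cSkew, toPoly_cSkew, C_add])

theorem ofPoly_add (p q : A[X]) : ofPoly θ (p + q) = ofPoly θ p + ofPoly θ q := by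
  exact Polynomial.sum_add_index p q _ (fun i => by rw [cSkew_zero, zero_mul])
    (fun i a b => by rw [cSkew_add, add_mul])

theorem ofPoly_zero : ofPoly θ (0 : A[X]) = 0 := Polynomial.sum_zero_index _

theorem ofPoly_monomial (i : ℕ) (a : A) : ofPoly θ (monomial i a) = cSkew θ a * xSkew A θ ^ i :=
  Polynomial.sum_monomial_index a _ (by rw [cSkew_zero, zero_mul])

@[simp]
theorem toPoly_ofPoly (p : A[X]) : toPoly (ofPoly θ p) = p := by
  induction p using Polynomial.induction_on' with
  | add p q hp hq => rw [ofPoly_add, toPoly_add, hp, hq]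
  | monomial i a =>
    rw [ofPoly_monomial, toPoly_mul, toPoly_cSkew, toPoly_xSkew_pow, skewMul_C_left,
      C_mul_X_pow_eq_monomial]

theorem ofPoly_toPoly (f : Skew A θ) : ofPoly θ (toPoly f) = f :=
  toPoly_injective θ (toPoly_ofPoly _)

theorem ofPoly_mul (p q : A[X]) : ofPoly θ (skewMul θ p q) = ofPoly θ p * ofPoly θ q :=
  toPoly_injective θ (by rw [toPoly_mul]; simp)

theorem ofPoly_sub (p q : A[X]) : ofPoly θ (p - q) = ofPoly θ p - ofPoly θ q :=
  toPoly_injective θ (by rw [toPoly_sub]; simp)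

theorem ofPoly_C_mul (a : A) (p : A[X]) : ofPoly θ (C a * p) = cSkew θ a * ofPoly θ p :=
  toPoly_injective θ (by rw [toPoly_mul, toPoly_cSkew, skewMul_C_left]; simp)

theorem ofPoly_X_pow_sub_one (n : ℕ) : ofPoly θ (X ^ n - 1 : A[X]) = xSkew A θ ^ n - 1 :=
  toPoly_injective θ (by rw [toPoly_sub, toPoly_xSkew_pow, toPoly_one]; simp)

end SkewModel

section SkewDivision
variable {A : Type*} [CommRing A] (θ : A →+* A)

theorem coeff_skewMul_natDegree_add {M : A[X]} (hM : M.Monic) (u : A[X]) :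
    (skewMul θ u M).coeff (u.natDegree + M.natDegree) = u.leadingCoeff := by
  rw [skewMul_apply, Polynomial.sum_def, finsetSum_coeff, Finset.sum_eq_single u.natDegree]
  · rw [coeff_mul_X_pow', if_pos (by omega), coeff_C_mul, Nat.add_sub_cancel_left, coeff_map,
      hM.coeff_natDegree, map_one, mul_one, coeff_natDegree]
  · intro i hi hne
    have hi : i < u.natDegree := lt_of_le_of_ne (le_natDegree_of_mem_supp i hi) hne
    rw [coeff_mul_X_pow', if_pos (by omega), coeff_C_mul,
      coeff_eq_zero_of_natDegree_lt ((natDegree_map_le).trans_lt (by omega)), mul_zero]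
  · intro hu
    rw [coeff_mul_X_pow', if_pos (by omega), coeff_C_mul, notMem_support_iff.mp hu, zero_mul]

theorem eq_zero_of_degree_skewMul_lt {M u : A[X]} (hM : M.Monic)
    (h : (skewMul θ u M).degree < M.degree) : u = 0 := by
  by_contra hu
  have hlead : (skewMul θ u M).coeff (u.natDegree + M.natDegree) ≠ 0 := by
    rw [coeff_skewMul_natDegree_add θ hM]
    exact leadingCoeff_ne_zero.mpr hu
  have := (degree_le_natDegree.trans (Nat.cast_le.mpr (Nat.le_add_left _ u.natDegree))).trans
    (le_degree_of_ne_zero hlead)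
  exact absurd h this.not_gt

theorem degree_sub_skewMul_lt [Nontrivial A] {M p : A[X]} (hM : M.Monic)
    (hMp : M.degree ≤ p.degree) :
    (p - skewMul θ (monomial (p.natDegree - M.natDegree) p.leadingCoeff) M).degree <
      p.degree := by
  have hp : p ≠ 0 := fun hp => by
    simp [hp, degree_eq_bot, hM.ne_zero] at hMp
  have hdeg := natDegree_le_natDegree hMp
  set k := p.natDegree - M.natDegree
  have hN : (M.map (θ ^ k) * X ^ k).Monic := (hM.map _).mul (monic_X_pow k)
  have hNdeg : (M.map (θ ^ k) * X ^ k).degree = p.degree := by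
    rw [(monic_X_pow k).degree_mul, hM.degree_map, degree_X_pow, degree_eq_natDegree hp,
      degree_eq_natDegree hM.ne_zero, ← Nat.cast_add]
    congr 1
    omega
  have hc : p.leadingCoeff ≠ 0 := leadingCoeff_ne_zero.mpr hp
  refine degree_sub_lt_left ?_ hp ?_
  · rw [skewMul_monomial_left, mul_assoc, hN.degree_mul, degree_C hc, zero_add, hNdeg]
  · rw [skewMul_monomial_left, mul_assoc, leadingCoeff_mul_monic hN, leadingCoeff_C]

theorem exists_eq_skewMul_add [Nontrivial A] {M : A[X]} (hM : M.Monic) (p : A[X]) :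
    ∃ u r, p = skewMul θ u M + r ∧ r.degree < M.degree := by
  induction hn : p.natDegree using Nat.strong_induction_on generalizing p with
  | _ n ih =>
  by_cases hp : p.degree < M.degree
  · exact ⟨0, p, by simp, hp⟩
  set q := monomial (p.natDegree - M.natDegree) p.leadingCoeff
  have hlt := degree_sub_skewMul_lt θ hM (not_lt.mp hp)
  by_cases h0 : p - skewMul θ q M = 0
  · exact ⟨q, 0, by rw [add_zero, ← sub_eq_zero, h0], by
      simpa [bot_lt_iff_ne_bot, degree_eq_bot] using hM.ne_zero⟩
  obtain ⟨u, r, hu, hr⟩ := ih _ (hn ▸ natDegree_lt_natDegree h0 hlt) _ rfl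
  exact ⟨q + u, r, by rw [skewMul_add_left, add_assoc, ← hu, add_sub_cancel], hr⟩

end SkewDivision

section Words
variable {A : Type*} [CommRing A] {n : ℕ}

theorem coeff_wordPoly (c : Fin n → A) (k : ℕ) :
    (wordPoly c).coeff k = if hk : k < n then c ⟨k, hk⟩ else 0 := by
  simp only [wordPoly, finsetSum_coeff, coeff_C_mul_X_pow]
  split_ifs with hk
  · rw [Finset.sum_eq_single ⟨k, hk⟩ (fun i _ hi => if_neg fun h => hi (Fin.ext h.symm))
      (by simp), if_pos rfl]
  · exact Finset.sum_eq_zero fun i _ => if_neg (by omega)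

theorem degree_wordPoly_lt (c : Fin n → A) : (wordPoly c).degree < n :=
  (degree_lt_iff_coeff_zero _ _).mpr fun k hk => by rw [coeff_wordPoly, dif_neg (by omega)]

@[simp]
theorem wordPoly_zero : wordPoly (0 : Fin n → A) = 0 := by
  simp [wordPoly]

theorem wordPoly_add (u v : Fin n → A) : wordPoly (u + v) = wordPoly u + wordPoly v := by
  simp only [wordPoly, Pi.add_apply, C_add, add_mul, Finset.sum_add_distrib]

theorem wordPoly_smul (γ : A) (u : Fin n → A) : wordPoly (γ • u) = C γ * wordPoly u := by
  simp only [wordPoly, Pi.smul_apply, smul_eq_mul, C_mul, Finset.mul_sum, mul_assoc]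

/-- The cyclic shift is multiplication by `x`, up to a multiple of `xⁿ - 1`. -/
theorem map_wordPoly_mul_X (θ : A →+* A) (c : Fin (n + 1) → A) :
    (wordPoly c).map θ * X =
      wordPoly (skewShift θ c) + C (θ (c (Fin.last n))) * (X ^ (n + 1) - 1) := by
  have hshift : wordPoly (skewShift θ c) =
      ∑ i : Fin (n + 1), C (θ (c i)) * X ^ ((i + 1 : Fin (n + 1)) : ℕ) :=
    Fintype.sum_equiv (Equiv.subRight 1) _ _ fun i => by
      simp only [skewShift, Equiv.subRight_apply, sub_add_cancel]
  have hmap : (wordPoly c).map θ * X = ∑ i : Fin (n + 1), C (θ (c i)) * X ^ ((i : ℕ) + 1) := by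
    simp only [wordPoly, Polynomial.map_sum, Polynomial.map_mul, map_C, Polynomial.map_pow,
      map_X, Finset.sum_mul, mul_assoc, pow_succ]
  rw [hshift, hmap, ← sub_eq_iff_eq_add', ← Finset.sum_sub_distrib,
    Finset.sum_eq_single (Fin.last n)]
  · simp only [Fin.last_add_one, Fin.val_zero, Fin.val_last]
    ring
  · intro i _ hi
    rw [Fin.val_add_one, if_neg hi, sub_self]
  · simp

end Words

section SkewCyclicCode
variable {A : Type*} [CommRing A] (θ : A →+* A) {n : ℕ}

theorem wordToQuot_add (u v : Fin n → A) :
    wordToQuot θ (u + v) = wordToQuot θ u + wordToQuot θ v := by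
  rw [wordToQuot, wordPoly_add, ofPoly_add, Submodule.Quotient.mk_add]; rfl

theorem wordToQuot_smul (γ : A) (u : Fin n → A) :
    wordToQuot θ (γ • u) = cSkew θ γ • wordToQuot θ u := by
  rw [wordToQuot, wordPoly_smul, ofPoly_C_mul, ← smul_eq_mul, Submodule.Quotient.mk_smul]; rfl

theorem xSkew_smul_wordToQuot [NeZero n] (c : Fin n → A) :
    xSkew A θ • wordToQuot θ c = wordToQuot θ (skewShift θ c) := by
  obtain ⟨n, rfl⟩ := Nat.exists_eq_succ_of_ne_zero (NeZero.ne n)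
  have hx : xSkew A θ = ofPoly θ X := toPoly_injective θ (by simp [toPoly_xSkew])
  rw [wordToQuot, wordToQuot, ← Submodule.Quotient.mk_smul, smul_eq_mul, hx, ← ofPoly_mul,
    skewMul_X_left, map_wordPoly_mul_X, Submodule.Quotient.eq, ofPoly_add, add_sub_cancel_left,
    ofPoly_C_mul, ofPoly_X_pow_sub_one]
  exact Submodule.smul_mem _ _ (Submodule.mem_span_singleton_self _)

theorem IsLinearCode.add_mem_image {C : Set (Fin n → A)} (hlin : IsLinearCode A C)
    {y z : SkewQuot A θ n} (hy : y ∈ wordToQuot θ '' C) (hz : z ∈ wordToQuot θ '' C) :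
    y + z ∈ wordToQuot θ '' C := by
  obtain ⟨u, hu, rfl⟩ := hy
  obtain ⟨v, hv, rfl⟩ := hz
  exact ⟨u + v, hlin.2.1 u hu v hv, wordToQuot_add θ u v⟩

/-- Stability under `A[x;θ]` is checked on its generators: the constants and `x`. -/
def codeSubmodule [NeZero n] {C : Set (Fin n → A)} (hlin : IsLinearCode A C)
    (hcyc : ∀ c ∈ C, skewShift θ c ∈ C) : Submodule (Skew A θ) (SkewQuot A θ n) where
  carrier := wordToQuot θ '' C
  add_mem' := hlin.add_mem_image θ
  zero_mem' := ⟨0, hlin.1, by rw [wordToQuot, wordPoly_zero, ofPoly_zero]; rfl⟩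
  smul_mem' f y hy := by
    rw [← ofPoly_toPoly f]
    induction toPoly f using Polynomial.induction_on' with
    | add p q hp hq => rw [ofPoly_add, add_smul]; exact hlin.add_mem_image θ hp hq
    | monomial i a =>
      rw [ofPoly_monomial, mul_smul]
      have hx : xSkew A θ ^ i • y ∈ wordToQuot θ '' C := by
        induction i with
        | zero => rwa [pow_zero, one_smul]
        | succ i ih =>
          obtain ⟨u, hu, hux⟩ := ih
          rw [pow_succ', mul_smul, ← hux, xSkew_smul_wordToQuot]
          exact ⟨_, hcyc u hu, rfl⟩
      obtain ⟨u, hu, hux⟩ := hx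
      exact ⟨a • u, hlin.2.2 a u hu, by rw [wordToQuot_smul, hux]⟩

variable [Nontrivial A]

theorem eq_zero_of_mem_skewIdeal [NeZero n] {p : Skew A θ} (hp : p ∈ skewIdeal A θ n)
    (hdeg : (toPoly p).degree < n) : p = 0 := by
  obtain ⟨w, rfl⟩ := Submodule.mem_span_singleton.mp hp
  have hM : (X ^ n - 1 : A[X]).Monic := by
    simpa using monic_X_pow_sub_C (1 : A) (NeZero.ne n)
  rw [smul_eq_mul, toPoly_mul, toPoly_sub, toPoly_xSkew_pow, toPoly_one] at hdeg
  have hdegM : (X ^ n - 1 : A[X]).degree = n := by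
    simpa using degree_X_pow_sub_C (Nat.pos_of_ne_zero (NeZero.ne n)) (1 : A)
  have hw := eq_zero_of_degree_skewMul_lt θ hM (hdegM ▸ hdeg)
  rw [← ofPoly_toPoly w, hw, ofPoly_zero, zero_smul]

theorem wordPoly_eq_of_wordToQuot_eq [NeZero n] {v : Fin n → A} {r : A[X]}
    (h : wordToQuot θ v = Submodule.Quotient.mk (ofPoly θ r)) (hr : r.degree < n) :
    wordPoly v = r := by
  rw [wordToQuot, Submodule.Quotient.eq, ← ofPoly_sub] at h
  have hdeg : (wordPoly v - r).degree < n :=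
    (degree_sub_le _ _).trans_lt (max_lt (degree_wordPoly_lt v) hr)
  have := eq_zero_of_mem_skewIdeal θ h (by rwa [toPoly_ofPoly])
  rw [← sub_eq_zero, ← toPoly_ofPoly (θ := θ) (wordPoly v - r), this]; rfl

/-- The remainder of `p` on right division by `c` is a codeword of smaller degree, hence zero. -/
theorem rdvd_of_mk_mem_image [NeZero n] {C : Set (Fin n → A)} (hlin : IsLinearCode A C)
    (hcyc : ∀ c ∈ C, skewShift θ c ∈ C) {c : Fin n → A} (hc : c ∈ C)
    (hmin : ∀ d ∈ C, d ≠ 0 → (wordPoly c).degree ≤ (wordPoly d).degree)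
    (hmon : (wordPoly c).Monic) {p : Skew A θ}
    (hp : Submodule.Quotient.mk p ∈ wordToQuot θ '' C) : RDvd (ofPoly θ (wordPoly c)) p := by
  let W := codeSubmodule θ hlin hcyc
  obtain ⟨u, r, hur, hr⟩ := exists_eq_skewMul_add θ hmon (toPoly p)
  have hrW : Submodule.Quotient.mk (ofPoly θ r) ∈ W := by
    have : ofPoly θ r = p - ofPoly θ u * ofPoly θ (wordPoly c) := by
      rw [← ofPoly_mul, eq_sub_iff_add_eq, ← ofPoly_add, add_comm, ← hur, ofPoly_toPoly]
    rw [this, Submodule.Quotient.mk_sub, ← smul_eq_mul, Submodule.Quotient.mk_smul]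
    exact W.sub_mem hp (W.smul_mem _ ⟨c, hc, rfl⟩)
  obtain ⟨v, hv, hvr⟩ := hrW
  have hvr := wordPoly_eq_of_wordToQuot_eq θ hvr (hr.trans (degree_wordPoly_lt c))
  have hr0 : r = 0 := by
    by_cases hv0 : v = 0
    · rw [← hvr, hv0, wordPoly_zero]
    · exact absurd (hvr ▸ hmin v hv hv0) hr.not_ge
  exact ⟨ofPoly θ u, toPoly_injective θ (by rw [toPoly_mul, hur, hr0, add_zero]; simp)⟩

end SkewCyclicCode

section MinimalMonicGenerator
variable {A : Type*} [CommRing A] [Nontrivial A] (θ : A →+* A) {n : ℕ} [NeZero n]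
  {C : Set (Fin n → A)} {c : Fin n → A}

theorem rdvd_X_pow_sub_one_of_monic_minimal (hlin : IsLinearCode A C)
    (hcyc : ∀ c ∈ C, skewShift θ c ∈ C) (hc : c ∈ C)
    (hmin : ∀ d ∈ C, d ≠ 0 → (wordPoly c).degree ≤ (wordPoly d).degree)
    (hmon : (wordPoly c).Monic) : RDvd (ofPoly θ (wordPoly c)) (xSkew A θ ^ n - 1) :=
  rdvd_of_mk_mem_image θ hlin hcyc hc hmin hmon <| by
    have h0 : (Submodule.Quotient.mk (xSkew A θ ^ n - 1) : SkewQuot A θ n) = 0 :=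
      (Submodule.Quotient.mk_eq_zero _).mpr (Submodule.mem_span_singleton_self _)
    rw [h0]
    exact (codeSubmodule θ hlin hcyc).zero_mem

theorem image_wordToQuot_eq_span_of_monic_minimal (hlin : IsLinearCode A C)
    (hcyc : ∀ c ∈ C, skewShift θ c ∈ C) (hc : c ∈ C)
    (hmin : ∀ d ∈ C, d ≠ 0 → (wordPoly c).degree ≤ (wordPoly d).degree)
    (hmon : (wordPoly c).Monic) :
    wordToQuot θ '' C = ↑(Submodule.span (Skew A θ)
      {(Submodule.Quotient.mk (p := skewIdeal A θ n) (ofPoly θ (wordPoly c)))}) := by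
  refine (Set.Subset.antisymm ?_ ?_)
  · rintro _ ⟨v, hv, rfl⟩
    obtain ⟨u, hu⟩ := rdvd_of_mk_mem_image θ hlin hcyc hc hmin hmon ⟨v, hv, rfl⟩
    exact Submodule.mem_span_singleton.mpr ⟨u, by rw [← Submodule.Quotient.mk_smul, smul_eq_mul, ← hu]; rfl⟩
  · exact Submodule.span_le (p := codeSubmodule θ hlin hcyc).mpr
      (Set.singleton_subset_iff.mpr ⟨c, hc, rfl⟩)

end MinimalMonicGenerator

section Reduction
variable {A B : Type*} [CommRing A] [CommRing B] {θA : A →+* A} {θB : B →+* B}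

theorem map_skewMul (φ : A →+* B) (hφ : Function.Semiconj φ θA θB) (p q : A[X]) :
    (skewMul θA p q).map φ = skewMul θB (p.map φ) (q.map φ) := by
  induction p using Polynomial.induction_on' with
  | add p p' hp hp' => rw [skewMul_add_left, Polynomial.map_add, hp, hp', Polynomial.map_add,
      skewMul_add_left]
  | monomial i a =>
    have hcomm : φ.comp (θA ^ i) = (θB ^ i).comp φ :=
      RingHom.ext fun x => by simpa using hφ.iterate_right i x
    rw [skewMul_monomial_left, map_monomial, skewMul_monomial_left, Polynomial.map_mul,
      Polynomial.map_mul, map_C, Polynomial.map_pow, map_X, map_map, map_map, hcomm]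

theorem RDvd.ofPoly_map (φ : A →+* B) (hφ : Function.Semiconj φ θA θB) {f p : A[X]}
    (h : RDvd (ofPoly θA f) (ofPoly θA p)) : RDvd (ofPoly θB (f.map φ)) (ofPoly θB (p.map φ)) := by
  obtain ⟨u, hu⟩ := h
  have hp : p = skewMul θA (toPoly u) f := by simpa [toPoly_mul] using congrArg toPoly hu
  exact ⟨ofPoly θB ((toPoly u).map φ), by rw [← ofPoly_mul, hp, map_skewMul φ hφ]⟩

end Reduction

section CoeffwiseLift
variable {R S : Type*} [CommRing R] [CommRing S]

theorem coeff_sum_C_mul_X_pow (F : R → S) (hF : F 0 = 0) (p : R[X]) (k : ℕ) :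
    (p.sum fun i r => C (F r) * X ^ i).coeff k = F (p.coeff k) := by
  simp only [Polynomial.sum_def, finsetSum_coeff, coeff_C_mul_X_pow, Finset.sum_ite_eq]
  split_ifs with hk
  · rfl
  · rw [notMem_support_iff.mp hk, hF]

/-- `g` is the coefficientwise `ι`-lift of `f mod ker π`. Since `ι 1 = 1`, `f` and `g` agree from
the leading coefficient of `f` upwards. -/
theorem exists_eq_add_C_mul_of_monic [Nontrivial R] (π : R →+* S) (ι : S → R)
    (hπι : ∀ s, π (ι s) = s) (hι0 : ι 0 = 0) (hι1 : ι 1 = 1) {t : R}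
    (hker : ∀ r, π r = 0 → ∃ b, r = t * b) {f : R[X]} (hf : f.Monic) :
    ∃ g a : R[X], f = g + C t * a ∧ g.map π = f.map π ∧ a.degree < g.degree := by
  have hdiv : ∀ r, ∃ b, (π r = 0 → r = t * b) ∧ (r = 0 → b = 0) := fun r => by
    by_cases hr : π r = 0
    · by_cases hr0 : r = 0
      · exact ⟨0, fun _ => by simp [hr0], fun _ => rfl⟩
      · obtain ⟨b, hb⟩ := hker r hr
        exact ⟨b, fun _ => hb, fun h => absurd h hr0⟩
    · exact ⟨0, fun h => absurd h hr, fun _ => rfl⟩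
  choose half hhalf using hdiv
  obtain ⟨g, hgc⟩ : ∃ g : R[X], ∀ k, g.coeff k = ι (π (f.coeff k)) :=
    ⟨_, coeff_sum_C_mul_X_pow (fun r => ι (π r)) (by simp [hι0]) f⟩
  obtain ⟨a, hac⟩ : ∃ a : R[X], ∀ k, a.coeff k = half (f.coeff k - g.coeff k) :=
    ⟨_, fun k => by rw [coeff_sum_C_mul_X_pow half ((hhalf 0).2 rfl), coeff_sub]⟩
  have hgf : ∀ k, f.natDegree ≤ k → g.coeff k = f.coeff k := fun k hk => by
    rcases hk.eq_or_lt with rfl | hk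
    · simp [hgc, hf.coeff_natDegree, hι1]
    · simp [hgc, coeff_eq_zero_of_natDegree_lt hk, hι0]
  have hg : g.degree = f.natDegree := by
    refine degree_eq_of_le_of_coeff_ne_zero ((degree_le_iff_coeff_zero _ _).mpr fun k hk => ?_) ?_
    · rw [hgf k (by exact_mod_cast hk.le), coeff_eq_zero_of_natDegree_lt (by exact_mod_cast hk)]
    · simp [hgf _ le_rfl, hf.coeff_natDegree]
  refine ⟨g, a, ext fun k => ?_, ext fun k => by simp [hgc, hπι], ?_⟩
  · rw [coeff_add, coeff_C_mul, hac, ← (hhalf _).1 (by simp [hgc, hπι]), add_sub_cancel]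
  · refine hg ▸ (degree_lt_iff_coeff_zero _ _).mpr fun k hk => ?_
    rw [hac, hgf k (by exact_mod_cast hk), sub_self, (hhalf 0).2 rfl]

end CoeffwiseLift

theorem Ideal.Quotient.mk_modByMonic {R : Type*} [CommRing R] (p q : R[X]) :
    Ideal.Quotient.mk (Ideal.span {q}) (p %ₘ q) = Ideal.Quotient.mk (Ideal.span {q}) p :=
  Ideal.Quotient.eq.mpr (Ideal.mem_span_singleton.mpr (dvd_modByMonic_sub p q))

section GaloisRing
variable (h : Z4[X])

theorem ker_bar : RingHom.ker bar = Ideal.span {2} := by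
  ext a
  rw [RingHom.mem_ker, Ideal.mem_span_singleton']
  revert a
  decide

theorem barR_mk (p : Z4[X]) :
    barR h (Ideal.Quotient.mk _ p) = Ideal.Quotient.mk _ (p.map bar) :=
  Ideal.quotientMap_mk

theorem mk_rep4 (α : R4 h) : Ideal.Quotient.mk _ (rep4 h α) = α :=
  (Ideal.Quotient.mk_modByMonic _ _).trans (Quotient.out_eq α)

theorem mk_rep2 (α : R2 h) : Ideal.Quotient.mk _ (rep2 h α) = α :=
  (Ideal.Quotient.mk_modByMonic _ _).trans (Quotient.out_eq α)

theorem nontrivial_R4 (hirr : Irreducible (h.map bar)) : Nontrivial (R4 h) := by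
  refine Ideal.Quotient.nontrivial_iff.mpr fun htop => hirr.not_isUnit (isUnit_of_dvd_one ?_)
  have h1 : (1 : Z4[X]) ∈ Ideal.span {h} := htop ▸ Submodule.mem_top
  simpa using Polynomial.map_dvd bar (Ideal.mem_span_singleton.mp h1)

theorem exists_eq_two_mul_of_barR_eq_zero {γ : R4 h} (hγ : barR h γ = 0) :
    ∃ β, γ = 2 * β := by
  obtain ⟨p, rfl⟩ := Ideal.Quotient.mk_surjective γ
  rw [barR_mk, Ideal.Quotient.eq_zero_iff_mem, Ideal.mem_span_singleton] at hγ
  obtain ⟨t', ht'⟩ := hγ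
  obtain ⟨t, rfl⟩ := Polynomial.map_surjective bar (ZMod.ringHom_surjective bar) t'
  have hker : p - h * t ∈ RingHom.ker (mapRingHom bar) := by
    rw [RingHom.mem_ker, coe_mapRingHom, Polynomial.map_sub, Polynomial.map_mul, ht', sub_self]
  rw [ker_mapRingHom, ker_bar, Ideal.map_span, Set.image_singleton,
    Ideal.mem_span_singleton] at hker
  obtain ⟨d, hd⟩ := hker
  refine ⟨Ideal.Quotient.mk _ d, ?_⟩
  rw [← sub_add_cancel p (h * t), hd, map_add, map_mul, map_mul,
    Ideal.Quotient.eq_zero_iff_mem.mpr (Ideal.mem_span_singleton_self h), zero_mul, add_zero,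
    show (C 2 : Z4[X]) = 2 from map_ofNat C 2, map_ofNat]

theorem barR_iota (α : R2 h) : barR h (iota h α) = α := by
  rw [iota, barR_mk]
  convert mk_rep2 h α
  ext k
  rw [coeff_map, coeff_sum_C_mul_X_pow _ (by rfl)]
  generalize (rep2 h α).coeff k = a
  revert a
  decide

variable {h}

theorem rep2_mk (hmon : h.Monic) (p : Z2[X]) : rep2 h (Ideal.Quotient.mk _ p) = p %ₘ h.map bar :=
  modByMonic_eq_of_dvd_sub (hmon.map bar) <| Ideal.mem_span_singleton.mp <|
    Ideal.Quotient.eq.mp (Quotient.out_eq _)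

theorem iota_zero (hmon : h.Monic) : iota h 0 = 0 := by
  rw [iota, ← map_zero (Ideal.Quotient.mk _), rep2_mk hmon, zero_modByMonic, sum_zero_index,
    map_zero]

theorem iota_one (hmon : h.Monic) (hdeg : 1 ≤ h.natDegree) : iota h 1 = 1 := by
  have hlt : (1 : Z2[X]).degree < (h.map bar).degree := by
    rw [degree_one, degree_eq_natDegree (hmon.map bar).ne_zero, hmon.natDegree_map]
    exact_mod_cast (hdeg : 0 < h.natDegree)
  rw [iota, ← map_one (Ideal.Quotient.mk _), rep2_mk hmon,
    (modByMonic_eq_self_iff (hmon.map bar)).mpr hlt, ← C_1, sum_C_index (by simp), pow_zero,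
    mul_one, (by decide : (((1 : Z2).val : Z4)) = 1), C_1, map_one]

end GaloisRing

section Frobenius
variable (h : Z4[X])

theorem barR_xi : barR h (xi h) = xibar h := by
  rw [xi, barR_mk, map_X]
  rfl

theorem barR_aeval_xi_sq (P : Z4[X]) :
    barR h (aeval (xi h ^ 2) P) = aeval (xibar h ^ 2) (P.map bar) := by
  rw [aeval_def, hom_eval₂, map_pow, barR_xi, aeval_def, eval₂_map]
  congr 1
  exact RingHom.ext_zmod _ _

theorem aeval_xibar (q : Z2[X]) : aeval (xibar h) q = Ideal.Quotient.mk _ q := by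
  rw [show xibar h = Ideal.Quotient.mkₐ Z2 (Ideal.span {h.map bar}) X from rfl,
    aeval_algHom_apply, aeval_X_left_apply]
  rfl

/-- `ξ̄²` is again a root of `h̄`, since `h̄(x)² = h̄(x²)` over `𝔽₂`. -/
theorem aeval_xibar_sq_map_bar : aeval (xibar h ^ 2) (h.map bar) = 0 := by
  rw [← expand_aeval, ZMod.expand_card, map_pow, aeval_xibar,
    Ideal.Quotient.eq_zero_iff_mem.mpr (Ideal.mem_span_singleton_self _), zero_pow two_ne_zero]

theorem barR_thetaFun4 (α : R4 h) : barR h (thetaFun4 h α) = thetaFun2 h (barR h α) := by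
  rw [thetaFun4, thetaFun2, barR_aeval_xi_sq]
  obtain ⟨t, ht⟩ : h.map bar ∣ (rep4 h α).map bar - rep2 h (barR h α) := by
    rw [← Ideal.mem_span_singleton, ← Ideal.Quotient.eq, ← barR_mk, mk_rep4, mk_rep2]
  rw [← sub_add_cancel ((rep4 h α).map bar) (rep2 h (barR h α)), ht, map_add, map_mul,
    aeval_xibar_sq_map_bar, zero_mul, zero_add]

end Frobenius

/-- If the set of nonzero minimal-degree polynomials of a skew cyclic
code `C` of length `s` over `R₄` contains a monic polynomial, then
`C = ⟨g(x)+2a(x)⟩` with `g+2a` a right divisor of `x^s-1` in `R₄[x,θ₄]`, `ḡ` a right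
divisor of `x^s-1` in `R₂[x,θ₂]` and `deg a < deg g`. -/
theorem skew_cyclic_monic_minimal_generator
    (m : ℕ) (hm : 1 ≤ m) (h : Z4[X]) (hbp : BasicPrimitive h m)
    (θ4 : R4 h →+* R4 h) (hθ4 : ⇑θ4 = thetaFun4 h)
    (θ2 : R2 h →+* R2 h) (hθ2 : ⇑θ2 = thetaFun2 h)
    (s : ℕ) [NeZero s]
    (C : Set (Fin s → R4 h)) (hlin : IsLinearCode (R4 h) C)
    (hcyc : ∀ c ∈ C, skewShift θ4 c ∈ C)
    (hminmonic : ∃ c ∈ C, (c ≠ 0 ∧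
        ∀ d ∈ C, d ≠ 0 → (wordPoly c).degree ≤ (wordPoly d).degree) ∧
      (wordPoly c).Monic) :
    ∃ g a : Polynomial (R4 h),
      RDvd (ofPoly θ4 (g + 2 * a)) (xSkew (R4 h) θ4 ^ s - 1) ∧
      RDvd (ofPoly θ2 (g.map (barR h))) (xSkew (R2 h) θ2 ^ s - 1) ∧
      a.degree < g.degree ∧
      wordToQuot θ4 '' C =
        ↑(Submodule.span (Skew (R4 h) θ4)
          {(Submodule.Quotient.mk (p := skewIdeal (R4 h) θ4 s) (ofPoly θ4 (g + 2 * a)))}) := by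
  obtain ⟨c, hc, ⟨-, hmin⟩, hmon⟩ := hminmonic
  have := nontrivial_R4 h hbp.2.2.1
  have hθ : Function.Semiconj (barR h) θ4 θ2 := fun α => by
    rw [hθ4, hθ2]
    exact barR_thetaFun4 h α
  obtain ⟨g, a, hga, hg, hdeg⟩ := exists_eq_add_C_mul_of_monic (barR h) (iota h) (barR_iota h)
    (iota_zero hbp.1) (iota_one hbp.1 (hbp.2.1 ▸ hm))
    (fun _ => exists_eq_two_mul_of_barR_eq_zero h) hmon
  rw [show (Polynomial.C 2 : (R4 h)[X]) = 2 from map_ofNat _ 2] at hga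
  have hdvd := rdvd_X_pow_sub_one_of_monic_minimal θ4 hlin hcyc hc hmin hmon
  have hdvd_bar : RDvd (ofPoly θ2 (g.map (barR h))) (xSkew (R2 h) θ2 ^ s - 1) := by
    rw [← ofPoly_X_pow_sub_one] at hdvd ⊢
    simpa [hg] using hdvd.ofPoly_map (barR h) hθ
  have hspan := image_wordToQuot_eq_span_of_monic_minimal θ4 hlin hcyc hc hmin hmon
  rw [hga] at hdvd hspan
  exact ⟨g, a, hdvd, hdvd_bar, hdeg, hspan⟩
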